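/- Let ν be a Borel measure on (0,1] with ∫ r² ν(dr) < ∞. Define Φ(q) = ∫_{(0,1]} (q r − 1 + (1−r)^q) ν(dr) for real q ≥ 1 and Ψ(q) = ∫_{(0,1]} (e^{-q r} − 1 + q r) ν(dr) for q ≥ 0. Then there exists a constant c ∈ (0,1), not depending on ν, such that c · Ψ(q) ≤ Φ(q) ≤ Ψ(q) for every real q ≥ 2. -/

import Mathlib

/-!
Take `c = 1/2`; both bounds hold pointwise for `r ∈ (0,1]`. The upper one is `(1-r)^q ≤ e^{-qr}`.
For the lower one, `h(r) = (qr - 1 + (1-r)^q) - ½(e^{-qr} - 1 + qr)` vanishes at `0` and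
`h'(r) = q(½ + ½s² - (1-r)^{q-1})` with `s = e^{-qr/2}`; as `q - 1 ≥ q/2`,
`(1-r)^{q-1} ≤ e^{-(q-1)r} ≤ s ≤ ½(1 + s²)`, so `h` is nondecreasing on `[0,1]`.
Integrating is legitimate because `0 ≤ e^{-qr} - 1 + qr ≤ q²r²/2`.
-/

open MeasureTheory

namespace Real

lemma exp_neg_sub_one_add_nonneg (x : ℝ) : 0 ≤ exp (-x) - 1 + x := by
  linarith [add_one_le_exp (-x)]

lemma exp_neg_sub_one_add_le_sq_div_two {x : ℝ} (hx : 0 ≤ x) :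
    exp (-x) - 1 + x ≤ x ^ 2 / 2 := by
  have hmono : MonotoneOn (fun t => t ^ 2 / 2 - (exp (-t) - 1 + t)) (Set.Ici 0) := by
    refine monotoneOn_of_hasDerivWithinAt_nonneg (f' := fun t => t - (-exp (-t) + 1))
      (convex_Ici 0) (by fun_prop) (fun t _ => ?_) (fun t _ => ?_)
    · have hexp : HasDerivAt (fun t => exp (-t)) (-exp (-t)) t := by
        simpa using (hasDerivAt_neg t).exp
      exact (((hasDerivAt_pow 2 t).div_const 2).sub
        ((hexp.sub_const 1).add (hasDerivAt_id t))).hasDerivWithinAt.congr_deriv (by simp)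
    · linarith [add_one_le_exp (-t)]
  simpa using hmono Set.self_mem_Ici hx hx

lemma one_sub_rpow_le_exp_neg_mul {r p : ℝ} (hr : r ≤ 1) (hp : 0 ≤ p) :
    (1 - r) ^ p ≤ exp (-p * r) :=
  calc (1 - r) ^ p ≤ exp (-r) ^ p := rpow_le_rpow (by linarith) (one_sub_le_exp_neg r) hp
    _ = exp (-p * r) := by rw [← exp_mul]; ring_nf

end Real

open Real

lemma hasDerivAt_mul_sub_one_add_one_sub_rpow_sub_half {q : ℝ} (hq : 1 ≤ q) (r : ℝ) :
    HasDerivAt (fun r => q * r - 1 + (1 - r) ^ q - 1 / 2 * (exp (-q * r) - 1 + q * r))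
      (q * (1 / 2 + exp (-q * r) / 2 - (1 - r) ^ (q - 1))) r := by
  have hrpow : HasDerivAt (fun r => (1 - r) ^ q) (q * (1 - r) ^ (q - 1) * -1) r :=
    (hasDerivAt_rpow_const (Or.inr hq)).comp r ((hasDerivAt_id r).const_sub 1)
  have hexp : HasDerivAt (fun r => exp (-q * r)) (exp (-q * r) * -q) r :=
    (hasDerivAt_exp _).comp r (((hasDerivAt_id' r).const_mul (-q)).congr_deriv (mul_one _))
  have hlin : HasDerivAt (fun r => q * r) q r :=
    ((hasDerivAt_id' r).const_mul q).congr_deriv (mul_one _)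
  exact (((hlin.sub_const 1).add hrpow).sub
    (((hexp.sub_const 1).add hlin).const_mul (1 / 2))).congr_deriv (by ring)

lemma half_exp_neg_mul_sub_one_add_mul_le {q r : ℝ} (hq : 2 ≤ q) (hr₀ : 0 ≤ r) (hr₁ : r ≤ 1) :
    1 / 2 * (exp (-q * r) - 1 + q * r) ≤ q * r - 1 + (1 - r) ^ q := by
  have hmono : MonotoneOn
      (fun r => q * r - 1 + (1 - r) ^ q - 1 / 2 * (exp (-q * r) - 1 + q * r)) (Set.Icc 0 1) := by
    refine monotoneOn_of_hasDerivWithinAt_nonneg (convex_Icc 0 1)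
      (fun x _ => (hasDerivAt_mul_sub_one_add_one_sub_rpow_sub_half (by linarith) x
        ).continuousAt.continuousWithinAt)
      (fun x _ => (hasDerivAt_mul_sub_one_add_one_sub_rpow_sub_half (by linarith) x
        ).hasDerivWithinAt) (fun x hx => ?_)
    rw [interior_Icc] at hx
    set s := exp (-q * x / 2)
    have hsq : exp (-q * x) = s ^ 2 := by rw [sq, ← exp_add]; ring_nf
    have hrpow : (1 - x) ^ (q - 1) ≤ s :=
      (one_sub_rpow_le_exp_neg_mul hx.2.le (by linarith)).trans
        (exp_le_exp.mpr (by nlinarith [hx.1]))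
    rw [hsq]
    nlinarith [sq_nonneg (1 - s)]
  simpa using hmono ⟨le_rfl, zero_le_one⟩ ⟨hr₀, hr₁⟩ hr₀

lemma integrable_exp_neg_mul_sub_one_add_mul {ν : Measure ℝ} (hν : ∀ᵐ r ∂ν, 0 ≤ r)
    (hsq : Integrable (fun r => r ^ 2) ν) {q : ℝ} (hq : 0 ≤ q) :
    Integrable (fun r => exp (-q * r) - 1 + q * r) ν := by
  refine (hsq.const_mul (q ^ 2 / 2)).mono' (by fun_prop) (hν.mono fun r hr => ?_)
  have hbound := exp_neg_sub_one_add_le_sq_div_two (mul_nonneg hq hr)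
  rw [← neg_mul] at hbound
  rw [norm_of_nonneg (by simpa using exp_neg_sub_one_add_nonneg (q * r))]
  linarith

/-- There is a universal constant `c ∈ (0,1)` such that for
every Borel measure `ν` on `(0,1]` with `∫ r² ν(dr) < ∞`, setting
`Φ(q) = ∫ (qr - 1 + (1-r)^q) ν(dr)` and `Ψ(q) = ∫ (e^{-qr} - 1 + qr) ν(dr)`,
one has `c Ψ(q) ≤ Φ(q) ≤ Ψ(q)` for every real `q ≥ 2`. -/
theorem stmt3 :
    ∃ c : ℝ, c ∈ Set.Ioo (0 : ℝ) 1 ∧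
      ∀ ν : Measure ℝ, ν (Set.Ioc 0 1)ᶜ = 0 →
        (∫⁻ r, ENNReal.ofReal (r ^ 2) ∂ν < ⊤) →
        ∀ q : ℝ, 2 ≤ q →
          c * ∫ r, (Real.exp (-q * r) - 1 + q * r) ∂ν
              ≤ ∫ r, (q * r - 1 + (1 - r) ^ q) ∂ν ∧
          ∫ r, (q * r - 1 + (1 - r) ^ q) ∂ν
              ≤ ∫ r, (Real.exp (-q * r) - 1 + q * r) ∂ν := by
  refine ⟨1 / 2, ⟨by norm_num, by norm_num⟩, fun ν hν hν₂ q hq => ?_⟩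
  have hr : ∀ᵐ r ∂ν, r ∈ Set.Ioc (0 : ℝ) 1 := mem_ae_iff.mpr hν
  have hsq : Integrable (fun r : ℝ => r ^ 2) ν :=
    (lintegral_ofReal_ne_top_iff_integrable (by fun_prop)
      (ae_of_all _ fun r => sq_nonneg r)).mp hν₂.ne
  have hlower : ∀ᵐ r ∂ν,
      1 / 2 * (exp (-q * r) - 1 + q * r) ≤ q * r - 1 + (1 - r) ^ q :=
    hr.mono fun r hr => half_exp_neg_mul_sub_one_add_mul_le hq hr.1.le hr.2
  have hupper : ∀ᵐ r ∂ν, q * r - 1 + (1 - r) ^ q ≤ exp (-q * r) - 1 + q * r :=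
    hr.mono fun r hr => by linarith [one_sub_rpow_le_exp_neg_mul hr.2 (by linarith : 0 ≤ q)]
  have hψ := integrable_exp_neg_mul_sub_one_add_mul (hr.mono fun r hr => hr.1.le) hsq
    (by linarith : 0 ≤ q)
  have hφ : Integrable (fun r => q * r - 1 + (1 - r) ^ q) ν :=
    integrable_of_le_of_le (by fun_prop) hlower hupper (hψ.const_mul _) hψ
  refine ⟨?_, integral_mono_ae hφ hψ hupper⟩
  rw [← integral_const_mul]
  exact integral_mono_ae (hψ.const_mul _) hφ hlower
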